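/- For the Hawk-Dove game with a=d=0, b=c=1 in the boundary mutation regime, the stationary distribution of the Moran process is s₀ = s_N = 1/(2 + 2μ(2^N - 2)) and s_j = 2μ·C(N,j)/(2 + 2μ(2^N - 2)) for 1 ≤ j ≤ N-1; this follows from verifying detailed balance and Σⱼ sⱼ = 1. -/

import Mathlib

open Finset

/-- Stationary distribution of the boundary-mutation Moran process for the
Hawk-Dove game a=d=0, b=c=1. -/
noncomputable def hawkDoveStat (N : ℕ) (μ : ℝ) (j : ℕ) : ℝ :=
  if j = 0 ∨ j = N then 1 / (2 + 2 * μ * (2 ^ N - 2))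
  else 2 * μ * (N.choose j : ℝ) / (2 + 2 * μ * (2 ^ N - 2))

/-- Up-transition T_{i→i+1}: μ at i = 0, (N-i)/(2N) for 1 ≤ i ≤ N-1. -/
noncomputable def hawkDoveUp (N : ℕ) (μ : ℝ) (i : ℕ) : ℝ :=
  if i = 0 then μ else ((N : ℝ) - i) / (2 * N)

/-- Down-transition T_{i→i-1}: μ at i = N, i/(2N) for 1 ≤ i ≤ N-1. -/
noncomputable def hawkDoveDown (N : ℕ) (μ : ℝ) (i : ℕ) : ℝ :=
  if i = N then μ else (i : ℝ) / (2 * N)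

/-! In the interior the chain is the symmetric Ehrenfest walk, whose reversible law is
binomial: `C(N, i) (N - i) = C(N, i + 1) (i + 1)`. At the boundary the mutation rate `μ`
out of `0` balances `2μN · 1/(2N)`, which is why the interior weights carry the factor `2μ`.
Normalization is then `∑ⱼ C(N, j) = 2 ^ N`. -/

noncomputable def hawkDoveWeight (N : ℕ) (μ : ℝ) (j : ℕ) : ℝ :=
  if j = 0 ∨ j = N then 1 else 2 * μ * N.choose j

theorem hawkDoveStat_eq_weight_div (N : ℕ) (μ : ℝ) (j : ℕ) :
    hawkDoveStat N μ j = hawkDoveWeight N μ j / (2 + 2 * μ * (2 ^ N - 2)) := by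
  unfold hawkDoveStat hawkDoveWeight
  split_ifs <;> rfl

theorem sum_range_choose_succ (n : ℕ) :
    ∑ i ∈ range n, ((n + 1).choose (i + 1) : ℝ) = 2 ^ (n + 1) - 2 := by
  have h : ∑ i ∈ range (n + 2), ((n + 1).choose i : ℝ) = 2 ^ (n + 1) := by
    exact_mod_cast Nat.sum_range_choose (n + 1)
  rw [sum_range_succ, sum_range_succ'] at h
  simp only [Nat.choose_self, Nat.choose_zero_right, Nat.cast_one] at h
  linarith

theorem sum_hawkDoveWeight {N : ℕ} (hN : 1 ≤ N) (μ : ℝ) :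
    ∑ j ∈ range (N + 1), hawkDoveWeight N μ j = 2 + 2 * μ * (2 ^ N - 2) := by
  obtain ⟨n, rfl⟩ : ∃ n, N = n + 1 := ⟨N - 1, by omega⟩
  have interior : ∀ i ∈ range n, hawkDoveWeight (n + 1) μ (i + 1)
      = 2 * μ * ((n + 1).choose (i + 1) : ℝ) := fun i hi => by
    rw [hawkDoveWeight, if_neg (by simp at hi; omega)]
  rw [sum_range_succ, sum_range_succ', sum_congr rfl interior, ← mul_sum,
    sum_range_choose_succ]
  simp only [hawkDoveWeight, true_or, or_true, if_true]
  ring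

theorem choose_mul_sub_eq_choose_succ_mul {N i : ℕ} (hi : i ≤ N) :
    (N.choose i : ℝ) * (N - i) = N.choose (i + 1) * (i + 1) := by
  have h := Nat.choose_succ_right_eq N i
  rw [← Nat.cast_sub hi]
  exact_mod_cast h.symm

theorem hawkDoveWeight_detailed_balance {N i : ℕ} (hi : i < N) (μ : ℝ) :
    hawkDoveWeight N μ i * hawkDoveUp N μ i
      = hawkDoveWeight N μ (i + 1) * hawkDoveDown N μ (i + 1) := by
  have hN : (N : ℝ) ≠ 0 := Nat.cast_ne_zero.2 (by omega)
  simp only [hawkDoveWeight, hawkDoveUp, hawkDoveDown]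
  rcases Nat.eq_zero_or_pos i with rfl | hi0
  · by_cases h1 : 1 = N
    · simp [h1]
    · simp only [true_or, ↓reduceIte, one_mul, zero_add, one_ne_zero, h1, or_self,
        Nat.choose_one_right, Nat.cast_one]
      field_simp
  · by_cases hlast : i + 1 = N
    · have hch : N.choose i = N := by
        rw [← hlast, Nat.choose_succ_self_right]
      have hNi : (N : ℝ) - i = 1 := by rw [← hlast]; push_cast; ring
      simp only [hlast, or_true, if_true, hi0.ne', false_or, hi.ne, if_false, hch, hNi]
      field_simp
    · simp only [hi0.ne', hi.ne, hlast, or_self, if_false, Nat.add_one_ne_zero]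
      rw [mul_div_assoc', mul_div_assoc', mul_assoc, mul_assoc,
        choose_mul_sub_eq_choose_succ_mul hi.le]
      push_cast
      ring

theorem hawkDove_stationary (N : ℕ) (hN : 2 ≤ N) (μ : ℝ)
    (hμ : μ ∈ Set.Ioo (0 : ℝ) 1) :
    (∑ j ∈ range (N + 1), hawkDoveStat N μ j) = 1 ∧
    (∀ i < N, hawkDoveStat N μ i * hawkDoveUp N μ i
        = hawkDoveStat N μ (i + 1) * hawkDoveDown N μ (i + 1)) := by
  have h2N : (2 : ℝ) ≤ 2 ^ N := le_self_pow₀ one_le_two (by omega)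
  have hD : 0 < 2 + 2 * μ * (2 ^ N - 2) := by
    have := mul_nonneg (mul_nonneg zero_le_two hμ.1.le) (sub_nonneg.2 h2N)
    linarith
  simp only [hawkDoveStat_eq_weight_div, div_mul_eq_mul_div]
  refine ⟨?_, fun i hi => ?_⟩
  · rw [← sum_div, sum_hawkDoveWeight (by omega), div_self hD.ne']
  · rw [hawkDoveWeight_detailed_balance hi]
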